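/- Let n ≥ 3 be an integer. Then 2·S(a) = 2·cosh(a) · ∫_1^∞ (t^{2n−2} − 1)^{−1/2} · (cosh²(a)·t² − 1)^{−1/2} dt tends to π/(n−1) as a → +∞ (equivalently, the height 2·S of the translation-invariant minimal hypersurface M_d tends to π/(n−1) as d = cosh^{n−1}(a) → +∞). -/

import Mathlib

open Real Filter MeasureTheory Set Topology

/-- `S n a = cosh(a) · ∫_1^∞ (t^{2n−2} − 1)^{-1/2} (cosh²(a)·t² − 1)^{-1/2} dt`. -/
noncomputable def S (n : ℕ) (a : ℝ) : ℝ :=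
  Real.cosh a *
    ∫ t in Set.Ioi (1 : ℝ),
      (t ^ (2 * n - 2) - 1) ^ (-(1 : ℝ) / 2) *
        (Real.cosh a ^ 2 * t ^ 2 - 1) ^ (-(1 : ℝ) / 2)

/-! Pulling `cosh a` into the second square root turns the integrand of `S n a` into
`(t^m − 1)^{-1/2} (t² − ε²)^{-1/2}` with `m = 2n − 2` and `ε = 1 / cosh a → 0`. For `|ε| ≤ 1/2`
it is dominated by twice its value at `ε = 0`, which has the primitive `(2/m) arctan √(t^m − 1)`,
so by dominated convergence `S n a → π / m = π / (2(n − 1))`. -/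

-- Both sides vanish for `x ≤ 0`: Mathlib's `x ^ y` for `x < 0` carries the factor `cos (y π) = 0`.
lemma Real.rpow_neg_one_half (x : ℝ) : x ^ (-(1 : ℝ) / 2) = (√x)⁻¹ := by
  rcases lt_or_ge x 0 with hx | hx
  · rw [rpow_def_of_neg hx, sqrt_eq_zero_of_nonpos hx.le, inv_zero]
    simp [show -(1 : ℝ) / 2 * π = -(π / 2) by ring]
  · rw [neg_div, rpow_neg hx, ← sqrt_eq_rpow]

lemma Real.tendsto_cosh_atTop : Tendsto cosh atTop atTop := by
  refine tendsto_atTop_mono (fun a => ?_) (tendsto_exp_atTop.atTop_div_const two_pos)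
  rw [cosh_eq]
  linarith [exp_pos (-a)]

noncomputable def heightIntegrand (m : ℕ) (ε t : ℝ) : ℝ :=
  (√(t ^ m - 1))⁻¹ * (√(t ^ 2 - ε ^ 2))⁻¹

lemma mul_inv_sqrt_sq_mul_sq_sub_one {c : ℝ} (hc : 0 < c) (t : ℝ) :
    c * (√(c ^ 2 * t ^ 2 - 1))⁻¹ = (√(t ^ 2 - c⁻¹ ^ 2))⁻¹ := by
  rw [show c ^ 2 * t ^ 2 - 1 = c ^ 2 * (t ^ 2 - c⁻¹ ^ 2) by field_simp,
    sqrt_mul (sq_nonneg c), sqrt_sq hc.le, mul_inv, ← mul_assoc, mul_inv_cancel₀ hc.ne', one_mul]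

lemma S_eq_integral_heightIntegrand (n : ℕ) (a : ℝ) :
    S n a = ∫ t in Ioi 1, heightIntegrand (2 * n - 2) (cosh a)⁻¹ t := by
  rw [S, ← integral_const_mul]
  congr 1 with t
  rw [heightIntegrand, rpow_neg_one_half, rpow_neg_one_half, mul_left_comm,
    mul_inv_sqrt_sq_mul_sq_sub_one (cosh_pos a)]

lemma heightIntegrand_nonneg (m : ℕ) (ε t : ℝ) : 0 ≤ heightIntegrand m ε t := by
  unfold heightIntegrand; positivity

lemma heightIntegrand_zero (m : ℕ) {t : ℝ} (ht : 0 ≤ t) :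
    heightIntegrand m 0 t = (√(t ^ m - 1))⁻¹ * t⁻¹ := by
  rw [heightIntegrand, zero_pow two_ne_zero, sub_zero, sqrt_sq ht]

lemma heightIntegrand_le_two_mul {t ε : ℝ} (ht : 1 ≤ t) (hε : |ε| ≤ 1 / 2) (m : ℕ) :
    heightIntegrand m ε t ≤ 2 * heightIntegrand m 0 t := by
  have hε2 : ε ^ 2 ≤ 1 / 4 := by nlinarith [sq_abs ε, abs_nonneg ε]
  have hsqrt : √(t ^ 2) / 2 ≤ √(t ^ 2 - ε ^ 2) := by
    rw [div_le_iff₀ two_pos, ← sqrt_sq zero_le_two, ← sqrt_mul (by nlinarith)]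
    exact sqrt_le_sqrt (by nlinarith)
  have hpos : 0 < √(t ^ 2) / 2 := div_pos (sqrt_pos.2 (by positivity)) two_pos
  rw [heightIntegrand, heightIntegrand, zero_pow two_ne_zero, sub_zero, mul_left_comm]
  refine mul_le_mul_of_nonneg_left ?_ (by positivity)
  calc (√(t ^ 2 - ε ^ 2))⁻¹ ≤ (√(t ^ 2) / 2)⁻¹ := inv_anti₀ hpos hsqrt
    _ = 2 * (√(t ^ 2))⁻¹ := by rw [inv_div, div_eq_mul_inv]

lemma hasDerivAt_arctan_sqrt_pow_sub_one {m : ℕ} (hm : m ≠ 0) {t : ℝ} (ht : 1 < t) :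
    HasDerivAt (fun t => 2 / m * arctan √(t ^ m - 1)) (heightIntegrand m 0 t) t := by
  have ht0 : 0 < t := one_pos.trans ht
  have hu : 0 < t ^ m - 1 := sub_pos.2 (one_lt_pow₀ ht hm)
  have hd := ((((hasDerivAt_pow m t).sub_const 1).sqrt hu.ne').arctan).const_mul (2 / (m : ℝ))
  refine hd.congr_deriv ?_
  have hm' : (m : ℝ) ≠ 0 := Nat.cast_ne_zero.2 hm
  have hpow : t ^ m = t ^ (m - 1) * t := by
    rw [← pow_succ, Nat.sub_add_cancel (Nat.one_le_iff_ne_zero.2 hm)]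
  rw [heightIntegrand_zero m ht0.le, sq_sqrt hu.le, add_sub_cancel, hpow]
  field_simp

lemma tendsto_arctan_sqrt_pow_sub_one {m : ℕ} (hm : m ≠ 0) :
    Tendsto (fun t : ℝ => 2 / m * arctan √(t ^ m - 1)) atTop (𝓝 (π / m)) := by
  have h := tendsto_arctan_atTop.mono_right nhdsWithin_le_nhds |>.comp <|
    tendsto_sqrt_atTop.comp <| tendsto_atTop_add_const_right atTop (-1) (tendsto_pow_atTop hm)
  convert h.const_mul (2 / (m : ℝ)) using 2
  · simp [sub_eq_add_neg]
  · ring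

lemma integrableOn_heightIntegrand_zero {m : ℕ} (hm : m ≠ 0) :
    IntegrableOn (heightIntegrand m 0) (Ioi 1) :=
  integrableOn_Ioi_deriv_of_nonneg (by fun_prop)
    (fun _ ht => hasDerivAt_arctan_sqrt_pow_sub_one hm ht)
    (fun _ _ => heightIntegrand_nonneg _ _ _) (tendsto_arctan_sqrt_pow_sub_one hm)

lemma integral_heightIntegrand_zero {m : ℕ} (hm : m ≠ 0) :
    ∫ t in Ioi 1, heightIntegrand m 0 t = π / m := by
  rw [integral_Ioi_of_hasDerivAt_of_nonneg (by fun_prop)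
    (fun _ ht => hasDerivAt_arctan_sqrt_pow_sub_one hm ht)
    (fun _ _ => heightIntegrand_nonneg _ _ _) (tendsto_arctan_sqrt_pow_sub_one hm)]
  simp

lemma tendsto_integral_heightIntegrand {m : ℕ} (hm : m ≠ 0) :
    Tendsto (fun ε => ∫ t in Ioi 1, heightIntegrand m ε t) (𝓝 0) (𝓝 (π / m)) := by
  rw [← integral_heightIntegrand_zero hm]
  refine tendsto_integral_filter_of_dominated_convergence (fun t => 2 * heightIntegrand m 0 t)
    (.of_forall fun ε => by unfold heightIntegrand; fun_prop) ?_
    ((integrableOn_heightIntegrand_zero hm).const_mul 2) ?_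
  · filter_upwards [Metric.closedBall_mem_nhds (0 : ℝ) one_half_pos] with ε hε
    refine (ae_restrict_iff' measurableSet_Ioi).2 (.of_forall fun t ht => ?_)
    rw [norm_of_nonneg (heightIntegrand_nonneg _ _ _)]
    exact heightIntegrand_le_two_mul (le_of_lt ht) (by simpa using hε) m
  · refine (ae_restrict_iff' measurableSet_Ioi).2 (.of_forall fun t ht => ?_)
    have hsqrt : √(t ^ 2 - 0 ^ 2) ≠ 0 := by
      rw [sqrt_ne_zero', zero_pow two_ne_zero, sub_zero]; exact pow_pos (one_pos.trans ht) 2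
    exact (((continuous_const.sub (continuous_pow 2)).sqrt.continuousAt.inv₀ hsqrt).const_mul
      _).tendsto

/-- For `n ≥ 3`, the height `2·S(a)` tends to `π/(n−1)` as `a → +∞`
(i.e. as `d = cosh^{n−1}(a) → +∞`). -/
theorem two_S_tendsto_pi_div (n : ℕ) (hn : 3 ≤ n) :
    Filter.Tendsto (fun a : ℝ => 2 * S n a) Filter.atTop
      (nhds (Real.pi / ((n : ℝ) - 1))) := by
  have hm : 2 * n - 2 ≠ 0 := by omega
  have hlim := (tendsto_integral_heightIntegrand hm).comp tendsto_cosh_atTop.inv_tendsto_atTop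
  have hcast : ((2 * n - 2 : ℕ) : ℝ) = 2 * ((n : ℝ) - 1) := by
    rw [Nat.cast_sub (by omega)]; push_cast; ring
  have hn1 : (n : ℝ) - 1 ≠ 0 := by
    have : (3 : ℝ) ≤ n := by exact_mod_cast hn
    linarith
  convert hlim.const_mul 2 using 1
  · simp_rw [S_eq_integral_heightIntegrand]; rfl
  · rw [hcast]; field_simp
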